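/- For nonneg integers m and j with j ≤ m, the alternating sum over ℓ from j to 2m+1 of (−1)^ℓ · C(2m+1, ℓ) · Stirling1unsigned(ℓ, ℓ−j) equals 0. -/

import Mathlib

/-!
For fixed `j`, the function `ℓ ↦ c(ℓ, ℓ - j)` (extended by `0` below `ℓ = j`) is a polynomial of
degree at most `2j` in the sense of finite differences: by the Stirling recurrence its forward
difference is `ℓ ↦ ℓ · c(ℓ, ℓ - (j - 1))`, and multiplying by `ℓ` raises the degree by at most
one. An alternating binomial sum `∑ (-1)^ℓ C(n, ℓ) p(ℓ)` is `± Δⁿ p (0)`, so it vanishes once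
`n > 2j`.
-/

/-- Unsigned Stirling numbers of the first kind: number of permutations of `n`
elements with exactly `k` cycles. -/
def stirling1 : ℕ → ℕ → ℕ
  | 0, 0 => 1
  | 0, _ + 1 => 0
  | _ + 1, 0 => 0
  | n + 1, k + 1 => n * stirling1 n (k + 1) + stirling1 n k

open Finset fwdDiff

section fwdDiff

variable {M G : Type*} [AddCommMonoid M] [AddCommGroup G] (h : M)

lemma fwdDiff_iter_zero (n : ℕ) : (Δ_[h])^[n] (0 : M → G) = 0 :=
  Function.iterate_fixed (funext fun _ ↦ sub_self 0) n

lemma fwdDiff_iter_eq_zero_of_le {f : M → G} {d n : ℕ} (hf : (Δ_[h])^[d] f = 0) (hdn : d ≤ n) :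
    (Δ_[h])^[n] f = 0 := by
  obtain ⟨k, rfl⟩ := Nat.exists_eq_add_of_le hdn
  rw [add_comm, Function.iterate_add_apply, hf, fwdDiff_iter_zero]

lemma sum_neg_one_pow_mul_choose_smul_eq_zero {f : M → G} {n : ℕ} (hf : (Δ_[h])^[n] f = 0)
    (y : M) : ∑ k ∈ range (n + 1), ((-1 : ℤ) ^ k * n.choose k) • f (y + k • h) = 0 := by
  have hsign : ∀ k ∈ range (n + 1), ((-1 : ℤ) ^ k * n.choose k) • f (y + k • h) =
      (-1 : ℤ) ^ n • (((-1 : ℤ) ^ (n - k) * n.choose k) • f (y + k • h)) := by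
    intro k hk
    have hexp : n + (n - k) = k + 2 * (n - k) := by have := mem_range.mp hk; omega
    rw [smul_smul, ← mul_assoc, ← pow_add, hexp, pow_add, pow_mul, neg_one_sq, one_pow, mul_one]
  rw [sum_congr rfl hsign, ← smul_sum, ← fwdDiff_iter_eq_sum_shift, hf, Pi.zero_apply, smul_zero]

end fwdDiff

lemma fwdDiff_iter_succ_natCast_mul_eq_zero {R : Type*} [Ring R] :
    ∀ {d : ℕ} {f : ℕ → R}, (Δ_[1])^[d] f = 0 → (Δ_[1])^[d + 1] (fun x : ℕ ↦ (x : R) * f x) = 0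
  | 0, f, hf => by
    subst hf
    ext x
    simp [fwdDiff]
  | d + 1, f, hf => by
    have leibniz : Δ_[1] (fun x : ℕ ↦ (x : R) * f x) =
        (fun x : ℕ ↦ (x : R) * Δ_[1] f x) + fun x ↦ f (x + 1) := by
      ext x
      simp only [fwdDiff, Pi.add_apply, Nat.cast_add, Nat.cast_one]
      noncomm_ring
    have hshift : (Δ_[1])^[d + 1] (fun x ↦ f (x + 1)) = 0 := by
      ext x
      rw [fwdDiff_iter_comp_add, hf, Pi.zero_apply, Pi.zero_apply]
    rw [Function.iterate_succ_apply, leibniz, fwdDiff_iter_add, hshift, add_zero]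
    exact fwdDiff_iter_succ_natCast_mul_eq_zero
      (by rwa [← Function.iterate_succ_apply (Δ_[1])])

lemma stirling1_eq_zero_of_lt : ∀ {n k : ℕ}, n < k → stirling1 n k = 0
  | 0, _ + 1, _ => rfl
  | n + 1, k + 1, h => by
    rw [stirling1, stirling1_eq_zero_of_lt (by omega : n < k + 1),
      stirling1_eq_zero_of_lt (by omega : n < k), mul_zero]

lemma stirling1_self : ∀ n : ℕ, stirling1 n n = 1
  | 0 => rfl
  | n + 1 => by rw [stirling1, stirling1_eq_zero_of_lt n.lt_succ_self, stirling1_self n, mul_zero]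

/-- Without the cut-off, the truncated subtraction would give `c(ℓ, 0)` for `ℓ < j`, which is
`1` at `ℓ = 0`. -/
def stirling1Diag (j ℓ : ℕ) : ℤ := if j ≤ ℓ then (stirling1 ℓ (ℓ - j) : ℤ) else 0

lemma stirling1Diag_zero : stirling1Diag 0 = fun _ ↦ 1 := by
  ext ℓ
  simp [stirling1Diag, stirling1_self]

lemma fwdDiff_stirling1Diag_succ (k : ℕ) :
    Δ_[1] (stirling1Diag (k + 1)) = fun ℓ : ℕ ↦ (ℓ : ℤ) * stirling1Diag k ℓ := by
  ext ℓ
  simp only [fwdDiff, stirling1Diag]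
  rcases lt_trichotomy ℓ k with hlt | rfl | hgt
  · simp [show ¬ k + 1 ≤ ℓ + 1 by omega, show ¬ k + 1 ≤ ℓ by omega, show ¬ k ≤ ℓ by omega]
  · cases ℓ <;> simp [stirling1]
  · obtain ⟨i, rfl⟩ := Nat.exists_eq_add_of_lt hgt
    rw [if_pos (by omega), if_pos (by omega), if_pos (by omega),
      show k + i + 1 + 1 - (k + 1) = i + 1 by omega, show k + i + 1 - (k + 1) = i by omega,
      show k + i + 1 - k = i + 1 by omega, stirling1]
    push_cast
    ring

lemma fwdDiff_iter_stirling1Diag (j : ℕ) : (Δ_[1])^[2 * j + 1] (stirling1Diag j) = 0 := by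
  induction j with
  | zero => rw [stirling1Diag_zero, Function.iterate_one, fwdDiff_const]; rfl
  | succ k ih =>
    rw [show 2 * (k + 1) + 1 = 2 * k + 1 + 1 + 1 by ring, Function.iterate_succ_apply,
      fwdDiff_stirling1Diag_succ]
    exact fwdDiff_iter_succ_natCast_mul_eq_zero ih

theorem stmt2 (m j : ℕ) (hjm : j ≤ m) :
    ∑ ℓ ∈ Finset.Icc j (2 * m + 1),
      (-1 : ℤ) ^ ℓ * (Nat.choose (2 * m + 1) ℓ : ℤ) * (stirling1 ℓ (ℓ - j) : ℤ) = 0 := by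
  have hvanish := sum_neg_one_pow_mul_choose_smul_eq_zero 1
    (fwdDiff_iter_eq_zero_of_le 1 (fwdDiff_iter_stirling1Diag j) (by omega : 2 * j + 1 ≤ 2 * m + 1))
    0
  simp only [zero_add, smul_eq_mul, mul_one, stirling1Diag, mul_ite, mul_zero, ← sum_filter]
    at hvanish
  rwa [show filter (j ≤ ·) (range (2 * m + 1 + 1)) = Icc j (2 * m + 1) by ext; simp; omega]
    at hvanish
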